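/- Let H be a Hilbert space and φ an endomorphism of H. Then φ is a bounded finite potent endomorphism if and only if φ = ψ + φ' where ψ is a bounded finite rank operator, φ' is a bounded nilpotent operator, and ψ∘φ' = φ'∘ψ = 0. -/

import Mathlib

/-!
The ranges `range φ^k`, `k ≥ n`, form a decreasing chain inside the finite-dimensional space
`range φ^n`, so they stabilise at some `U = range φ^m`. Then `φ` maps `U` onto itself, hence
bijectively, which yields the Fitting decomposition `H = ker φ^m ⊕ U`. The kernel is closed and
`U` is finite-dimensional, so the projection `p` onto `ker φ^m` along `U` is continuous; it commutes
with `φ` because both summands are `φ`-invariant. Now `ψ = φ (1 - p)` has range in `U`,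
`φ' = φ p` is nilpotent since `φ^m p = 0`, and `ψ φ' = φ' ψ = 0` because `p (1 - p) = 0`.
Conversely, `ψ φ' = φ' ψ = 0` gives `(ψ + φ')^(k+1) = ψ^(k+1) + φ'^(k+1)`, which is `ψ^(k+1)`
once `φ'^k = 0`.
-/

open LinearMap (ker range)

section Ring

variable {R : Type*} [Ring R]

theorem add_pow_succ_of_mul_eq_zero {a b : R} (hab : a * b = 0) (hba : b * a = 0) (n : ℕ) :
    (a + b) ^ (n + 1) = a ^ (n + 1) + b ^ (n + 1) := by
  induction n with
  | zero => simp
  | succ n ih =>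
    have hab' : a ^ (n + 1) * b = 0 := by rw [pow_succ, mul_assoc, hab, mul_zero]
    have hba' : b ^ (n + 1) * a = 0 := by rw [pow_succ, mul_assoc, hba, mul_zero]
    rw [pow_succ, ih, add_mul, mul_add, mul_add, hab', hba', add_zero, zero_add, ← pow_succ,
      ← pow_succ]

theorem IsIdempotentElem.mul_mul_mul_one_sub_eq_zero {a e : R} (he : IsIdempotentElem e)
    (hae : Commute a e) : a * e * (a * (1 - e)) = 0 := by
  rw [mul_assoc, ← mul_assoc e, ← hae.eq, mul_assoc, he.mul_one_sub_self, mul_zero, mul_zero]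

theorem Commute.isNilpotent_mul_of_pow_mul_eq_zero {a b : R} (hab : Commute a b) {m : ℕ}
    (h : a ^ m * b = 0) : IsNilpotent (a * b) :=
  ⟨m + 1, by rw [hab.mul_pow, pow_succ', pow_succ' b, mul_assoc, ← mul_assoc (a ^ m), h,
    zero_mul, mul_zero]⟩

end Ring

namespace LinearMap

section Ring

variable {R M : Type*} [Ring R] [AddCommGroup M] [Module R M]

theorem range_pow_le_range_pow (f : Module.End R M) {m n : ℕ} (h : m ≤ n) :
    range (f ^ n) ≤ range (f ^ m) :=
  f.iterateRange.monotone h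

theorem ker_mem_invtSubmodule_of_commute {f g : Module.End R M} (h : Commute f g) :
    ker g ∈ Module.End.invtSubmodule f := by
  intro x hx
  rw [Submodule.mem_comap, mem_ker, ← Module.End.mul_apply, ← h.eq, Module.End.mul_apply,
    mem_ker.1 hx, map_zero]

theorem range_mem_invtSubmodule_of_commute {f g : Module.End R M} (h : Commute f g) :
    range g ∈ Module.End.invtSubmodule f := by
  rintro _ ⟨x, rfl⟩
  exact ⟨f x, by simp [← Module.End.mul_apply, h.eq]⟩

theorem isCompl_ker_pow_range_pow_of_range_pow_succ_eq (f : Module.End R M) {m : ℕ}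
    [IsNoetherian R (range (f ^ m))] (h : range (f ^ (m + 1)) = range (f ^ m)) :
    IsCompl (ker (f ^ m)) (range (f ^ m)) := by
  set U := range (f ^ m)
  have hU : ∀ x ∈ U, f x ∈ U := range_mem_invtSubmodule_of_commute (Commute.self_pow f m)
  set g := f.restrict hU
  have hg_surj : Function.Surjective g := by
    rintro ⟨_, hy⟩
    rw [← h] at hy
    obtain ⟨x, rfl⟩ := hy
    exact ⟨⟨(f ^ m) x, x, rfl⟩, Subtype.ext (by simp [g, pow_succ'])⟩
  have hg_bij : Function.Bijective (g ^ m) := by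
    have hg_inj := IsNoetherian.injective_of_surjective_endomorphism g hg_surj
    exact ⟨Module.End.coe_pow g m ▸ hg_inj.iterate m, Module.End.coe_pow g m ▸ hg_surj.iterate m⟩
  have hg_pow (x : U) : ((g ^ m) x : M) = (f ^ m) x := by
    rw [Module.End.pow_restrict]; rfl
  constructor
  · rw [Submodule.disjoint_def]
    intro x hxK hxU
    have : (g ^ m) ⟨x, hxU⟩ = 0 := Subtype.ext (by simpa [hg_pow] using hxK)
    simpa using congrArg Subtype.val (hg_bij.1 (this.trans (map_zero _).symm))
  · rw [codisjoint_iff, Submodule.eq_top_iff']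
    intro x
    obtain ⟨u, hu⟩ := hg_bij.2 ⟨(f ^ m) x, x, rfl⟩
    refine Submodule.mem_sup.2 ⟨x - u, ?_, u, u.2, sub_add_cancel x u⟩
    rw [mem_ker, map_sub, ← hg_pow, hu, sub_self]

end Ring

variable {K V : Type*} [DivisionRing K] [AddCommGroup V] [Module K V]

theorem exists_range_pow_succ_eq (f : Module.End K V) (n : ℕ)
    [FiniteDimensional K (range (f ^ n))] : ∃ m, n ≤ m ∧ range (f ^ (m + 1)) = range (f ^ m) := by
  have hfin (k : ℕ) : FiniteDimensional K (range (f ^ (n + k))) :=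
    Submodule.finiteDimensional_of_le (f.range_pow_le_range_pow (Nat.le_add_right n k))
  let k := Function.argmin fun k ↦ Module.finrank K (range (f ^ (n + k)))
  refine ⟨n + k, Nat.le_add_right n k, Submodule.eq_of_le_of_finrank_le
    (f.range_pow_le_range_pow (Nat.le_succ _)) ?_⟩
  exact Function.argmin_le (fun k ↦ Module.finrank K (range (f ^ (n + k)))) (k + 1)

theorem exists_isCompl_ker_pow_range_pow (f : Module.End K V) (n : ℕ)
    [FiniteDimensional K (range (f ^ n))] :
    ∃ m, IsCompl (ker (f ^ m)) (range (f ^ m)) ∧ FiniteDimensional K (range (f ^ m)) := by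
  obtain ⟨m, hnm, hm⟩ := f.exists_range_pow_succ_eq n
  have : FiniteDimensional K (range (f ^ m)) :=
    Submodule.finiteDimensional_of_le (f.range_pow_le_range_pow hnm)
  exact ⟨m, f.isCompl_ker_pow_range_pow_of_range_pow_succ_eq hm, this⟩

end LinearMap

namespace ContinuousLinearMap

variable {𝕜 E : Type*} [NontriviallyNormedField 𝕜] [CompleteSpace 𝕜] [AddCommGroup E]
  [TopologicalSpace E] [IsTopologicalAddGroup E] [Module 𝕜 E] [ContinuousSMul 𝕜 E] [T2Space E]

theorem exists_finiteRank_add_nilpotent_of_isCompl (T : E →L[𝕜] E) {m : ℕ}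
    (hT : IsCompl (T ^ m).ker (T ^ m).range) [FiniteDimensional 𝕜 (T ^ m).range] :
    ∃ ψ N : E →L[𝕜] E, T = ψ + N ∧ FiniteDimensional 𝕜 ψ.range ∧ IsNilpotent N ∧
      ψ * N = 0 ∧ N * ψ = 0 := by
  have htop :=
    Submodule.IsCompl.isTopCompl_of_isClosed_of_finiteDimensional hT (T ^ m).isClosed_ker
  set p := (T ^ m).ker.projectionL (T ^ m).range htop
  have hp : IsIdempotentElem p := Submodule.isIdempotentElem_projectionL htop
  have hcomm : Commute (T : E →ₗ[𝕜] E) (T ^ m : E →L[𝕜] E) := by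
    rw [toLinearMap_pow]; exact Commute.self_pow _ m
  have hTp : Commute T p := by
    refine ((ContinuousLinearMap.IsIdempotentElem.commute_iff hp).2 ⟨?_, ?_⟩).symm
    · rw [Submodule.range_projectionL]
      exact LinearMap.ker_mem_invtSubmodule_of_commute hcomm
    · rw [Submodule.ker_projectionL]
      exact LinearMap.range_mem_invtSubmodule_of_commute hcomm
  have hψ_range : (T * (1 - p)).range ≤ (T ^ m).range := by
    rintro _ ⟨x, rfl⟩
    refine LinearMap.range_mem_invtSubmodule_of_commute hcomm ?_
    change x - p x ∈ _
    rw [← Submodule.projectionL_eq_self_sub_projectionL htop]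
    exact Submodule.projectionL_apply_mem htop.symm x
  have hpow_mul : T ^ m * p = 0 := by
    ext x
    exact Submodule.projectionL_apply_mem htop x
  refine ⟨T * (1 - p), T * p, by noncomm_ring, Submodule.finiteDimensional_of_le hψ_range,
    hTp.isNilpotent_mul_of_pow_mul_eq_zero hpow_mul, ?_, hp.mul_mul_mul_one_sub_eq_zero hTp⟩
  simpa using hp.one_sub.mul_mul_mul_one_sub_eq_zero ((Commute.one_right T).sub_right hTp)

end ContinuousLinearMap

theorem bounded_finite_potent_sum_characterization_general {H : Type*} [NormedAddCommGroup H]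
    [InnerProductSpace ℂ H] (φ : H →ₗ[ℂ] H) :
    (Continuous ⇑φ ∧ ∃ n : ℕ, FiniteDimensional ℂ (LinearMap.range (φ ^ n))) ↔
    ∃ ψ φ' : H →ₗ[ℂ] H, φ = ψ + φ' ∧
      Continuous ⇑ψ ∧ FiniteDimensional ℂ (LinearMap.range ψ) ∧
      Continuous ⇑φ' ∧ IsNilpotent φ' ∧
      ψ ∘ₗ φ' = 0 ∧ φ' ∘ₗ ψ = 0 := by
  constructor
  · rintro ⟨hφ, n, hn⟩
    let T : H →L[ℂ] H := ⟨φ, hφ⟩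
    obtain ⟨m, hcompl, hfin⟩ := φ.exists_isCompl_ker_pow_range_pow n
    rw [← T.toLinearMap_pow m] at hcompl hfin
    obtain ⟨ψ, N, hsum, hψ, hN, hψN, hNψ⟩ := T.exists_finiteRank_add_nilpotent_of_isCompl hcompl
    exact ⟨ψ, N, congr(($hsum : H →ₗ[ℂ] H)), ψ.continuous, hψ, N.continuous,
      hN.map ContinuousLinearMap.toLinearMapRingHom, congr(($hψN : H →ₗ[ℂ] H)),
      congr(($hNψ : H →ₗ[ℂ] H))⟩
  · rintro ⟨ψ, N, rfl, hψ, hψfin, hN, ⟨k, hk⟩, hψN, hNψ⟩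
    refine ⟨hψ.add hN, k + 1, ?_⟩
    rw [add_pow_succ_of_mul_eq_zero hψN hNψ, pow_eq_zero_of_le k.le_succ hk, add_zero]
    exact Submodule.finiteDimensional_of_le
      (pow_one ψ ▸ ψ.range_pow_le_range_pow (Nat.le_add_left 1 k))

/-- Characterization: `φ` is a bounded finite potent endomorphism iff `φ = ψ + φ'`
with `ψ` a bounded finite rank operator, `φ'` a bounded nilpotent operator, and
`ψ ∘ φ' = φ' ∘ ψ = 0`. -/
theorem bounded_finite_potent_sum_characterization {H : Type*} [NormedAddCommGroup H]
    [InnerProductSpace ℂ H] [CompleteSpace H] (φ : H →ₗ[ℂ] H) :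
    (Continuous ⇑φ ∧ ∃ n : ℕ, FiniteDimensional ℂ (LinearMap.range (φ ^ n))) ↔
    ∃ ψ φ' : H →ₗ[ℂ] H, φ = ψ + φ' ∧
      Continuous ⇑ψ ∧ FiniteDimensional ℂ (LinearMap.range ψ) ∧
      Continuous ⇑φ' ∧ IsNilpotent φ' ∧
      ψ ∘ₗ φ' = 0 ∧ φ' ∘ₗ ψ = 0 :=
  bounded_finite_potent_sum_characterization_general φ
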